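/- arXiv:2509.02205 — 2 statements merged into one kernel-verified Lean document; each statement's English description precedes it below -/
import Mathlib

section
/- Let X and Y be Polish spaces, c : X×Y → [0,∞] lower semicontinuous, L : Y → [0,∞] lower semicontinuous with compact sublevel sets, and H : Y×Y → [0,∞] lower semicontinuous and symmetric. Assume Hypothesis (E) holds with Borel gluing map G and constant C > 0. Then for all μ0, μ1 ∈ P(X) with W1(μ0,μ1) < ∞, |inf_{γ ∈ P_{μ0}(X×Y)} J(γ) − inf_{γ ∈ P_{μ1}(X×Y)} J(γ)| ≤ 4C·W1(μ0,μ1) (in the sense that the two infima in [0,∞] differ by at most 4C·W1(μ0,μ1), one being finite iff the other is). -/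
open MeasureTheory ProbabilityTheory
open scoped ENNReal

/-!
Given a plan `γ` with first marginal `μ₀` and a coupling `π` of `μ₀` and `μ₁`, glue them along
their common marginal into a law of `(x₀, x₁, y)`, and move each `y` to `G (x₁, x₀, y)`. This gives
a plan with first marginal `μ₁` whose cost exceeds `J γ` by at most `C ∫ d(x₀, x₁) dπ` in the
`c`- and `L`-terms and by `2 C ∫ d(x₀, x₁) dπ` in the `H`-term, since each of the two variables of
`H` is moved. Optimising over `γ` and `π`, and swapping the roles of `μ₀` and `μ₁`, gives both
inequalities.
-/

section Energy

variable {X Y Z : Type*} [MeasurableSpace X] [MeasurableSpace Y] [MeasurableSpace Z]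

noncomputable def energy (c : X × Y → ℝ≥0∞) (L : Y → ℝ≥0∞) (H : Y × Y → ℝ≥0∞)
    (γ : Measure (X × Y)) : ℝ≥0∞ :=
  ∫⁻ p, c p ∂γ + ∫⁻ y, L y ∂(γ.map Prod.snd) +
    ∫⁻ q, H q ∂((γ.map Prod.snd).prod (γ.map Prod.snd))

lemma lintegral_le_lintegral_add_mul {μ : Measure Z} {f g e : Z → ℝ≥0∞} (C : ℝ≥0∞)
    (he : Measurable e) (h : ∀ z, f z ≤ g z + C * e z) :
    ∫⁻ z, f z ∂μ ≤ ∫⁻ z, g z ∂μ + C * ∫⁻ z, e z ∂μ :=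
  calc ∫⁻ z, f z ∂μ ≤ ∫⁻ z, g z + C * e z ∂μ := lintegral_mono h
    _ = ∫⁻ z, g z ∂μ + C * ∫⁻ z, e z ∂μ := by
      rw [lintegral_add_right _ (he.const_mul C), lintegral_const_mul C he]

lemma lintegral_fst_add_snd_prod_self {μ : Measure Z} [IsProbabilityMeasure μ]
    {e : Z → ℝ≥0∞} (he : Measurable e) :
    ∫⁻ p, e p.1 + e p.2 ∂(μ.prod μ) = 2 * ∫⁻ z, e z ∂μ := by
  rw [lintegral_add_left (f := fun p : Z × Z => e p.1) (he.comp measurable_fst),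
    (measurePreserving_fst (μ := μ) (ν := μ)).lintegral_comp he,
    (measurePreserving_snd (μ := μ) (ν := μ)).lintegral_comp he, two_mul]

theorem energy_map_le {c : X × Y → ℝ≥0∞} {L : Y → ℝ≥0∞} {H : Y × Y → ℝ≥0∞}
    (hc : Measurable c) (hL : Measurable L) (hH : Measurable H)
    {θ : Measure Z} [IsProbabilityMeasure θ] {A F : Z → X × Y}
    (hA : Measurable A) (hF : Measurable F) {e : Z → ℝ≥0∞} (he : Measurable e) (C : ℝ≥0∞)
    (hc_le : ∀ z, c (F z) ≤ c (A z) + C * e z)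
    (hL_le : ∀ z, L (F z).2 ≤ L (A z).2 + C * e z)
    (hH_le : ∀ z w, H ((F z).2, (F w).2) ≤ H ((A z).2, (A w).2) + C * (e z + e w)) :
    energy c L H (θ.map F) ≤ energy c L H (θ.map A) + 4 * C * ∫⁻ z, e z ∂θ := by
  have hmarg : ∀ {P : Z → X × Y}, Measurable P →
      (θ.map P).map Prod.snd = θ.map (fun z => (P z).2) := fun hP =>
    Measure.map_map measurable_snd hP
  have hprod : ∀ {P : Z → X × Y}, Measurable P →
      ∫⁻ q, H q ∂(((θ.map P).map Prod.snd).prod ((θ.map P).map Prod.snd)) =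
        ∫⁻ p, H ((P p.1).2, (P p.2).2) ∂(θ.prod θ) := fun hP => by
    rw [hmarg hP, Measure.map_prod_map _ _ hP.snd hP.snd,
      lintegral_map hH (hP.snd.prodMap hP.snd)]
    rfl
  have hc_term : ∫⁻ p, c p ∂(θ.map F) ≤ ∫⁻ p, c p ∂(θ.map A) + C * ∫⁻ z, e z ∂θ := by
    rw [lintegral_map hc hF, lintegral_map hc hA]
    exact lintegral_le_lintegral_add_mul C he hc_le
  have hL_term : ∫⁻ y, L y ∂((θ.map F).map Prod.snd) ≤
      ∫⁻ y, L y ∂((θ.map A).map Prod.snd) + C * ∫⁻ z, e z ∂θ := by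
    rw [hmarg hF, hmarg hA, lintegral_map hL hF.snd, lintegral_map hL hA.snd]
    exact lintegral_le_lintegral_add_mul C he hL_le
  have hH_term : ∫⁻ q, H q ∂(((θ.map F).map Prod.snd).prod ((θ.map F).map Prod.snd)) ≤
      ∫⁻ q, H q ∂(((θ.map A).map Prod.snd).prod ((θ.map A).map Prod.snd)) +
        C * (2 * ∫⁻ z, e z ∂θ) := by
    rw [hprod hF, hprod hA, ← lintegral_fst_add_snd_prod_self he]
    exact lintegral_le_lintegral_add_mul C (by fun_prop) fun p => hH_le p.1 p.2
  calc energy c L H (θ.map F)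
      ≤ (∫⁻ p, c p ∂(θ.map A) + C * ∫⁻ z, e z ∂θ) +
          (∫⁻ y, L y ∂((θ.map A).map Prod.snd) + C * ∫⁻ z, e z ∂θ) +
          (∫⁻ q, H q ∂(((θ.map A).map Prod.snd).prod ((θ.map A).map Prod.snd)) +
            C * (2 * ∫⁻ z, e z ∂θ)) := by
        unfold energy; gcongr
    _ = energy c L H (θ.map A) + 4 * C * ∫⁻ z, e z ∂θ := by unfold energy; ring

end Energy

section Gluing

variable {X Y : Type*} [MeasurableSpace X] [MeasurableSpace Y] [StandardBorelSpace Y]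

theorem exists_glue {π : Measure (X × X)} [IsProbabilityMeasure π]
    {γ : Measure (X × Y)} [IsProbabilityMeasure γ] (h : π.map Prod.fst = γ.fst) :
    ∃ θ : Measure ((X × X) × Y), IsProbabilityMeasure θ ∧ θ.map Prod.fst = π ∧
      θ.map (fun q => (q.1.1, q.2)) = γ := by
  have : Nonempty Y := (nonempty_of_isProbabilityMeasure γ).map Prod.snd
  set κ : Kernel (X × X) Y := γ.condKernel.comap Prod.fst measurable_fst
  have hA : Measurable fun q : (X × X) × Y => (q.1.1, q.2) := by fun_prop
  refine ⟨π ⊗ₘ κ, inferInstance, Measure.fst_compProd π κ, ?_⟩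
  conv_rhs => rw [← γ.disintegrate γ.condKernel, ← h]
  ext s hs
  rw [Measure.map_apply hA hs, Measure.compProd_apply (hA hs), Measure.compProd_apply hs,
    lintegral_map (Kernel.measurable_kernel_prodMk_left hs) measurable_fst]
  rfl

end Gluing

section Wasserstein

variable {X : Type*} [MeasurableSpace X]

def couplings (μ₀ μ₁ : Measure X) : Set (Measure (X × X)) :=
  {π | IsProbabilityMeasure π ∧ π.map Prod.fst = μ₀ ∧ π.map Prod.snd = μ₁}

lemma map_swap_mem_couplings {μ₀ μ₁ : Measure X} {π : Measure (X × X)}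
    (hπ : π ∈ couplings μ₀ μ₁) : π.map Prod.swap ∈ couplings μ₁ μ₀ := by
  obtain ⟨hπ, hπ₀, hπ₁⟩ := hπ
  refine ⟨Measure.isProbabilityMeasure_map measurable_swap.aemeasurable, ?_, ?_⟩
  · rwa [Measure.map_map measurable_fst measurable_swap]
  · rwa [Measure.map_map measurable_snd measurable_swap]

variable [PseudoEMetricSpace X]

noncomputable def wasserstein₁ (μ₀ μ₁ : Measure X) : ℝ≥0∞ :=
  ⨅ π ∈ couplings μ₀ μ₁, ∫⁻ p, edist p.1 p.2 ∂π

variable [OpensMeasurableSpace X] [SecondCountableTopology X]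

lemma lintegral_edist_map_swap (π : Measure (X × X)) :
    ∫⁻ p, edist p.1 p.2 ∂(π.map Prod.swap) = ∫⁻ p, edist p.1 p.2 ∂π := by
  rw [lintegral_map measurable_edist measurable_swap]
  exact lintegral_congr fun p => edist_comm _ _

lemma wasserstein₁_le_comm (μ₀ μ₁ : Measure X) : wasserstein₁ μ₀ μ₁ ≤ wasserstein₁ μ₁ μ₀ :=
  le_iInf₂ fun π hπ => (iInf₂_le _ (map_swap_mem_couplings hπ)).trans_eq
    (lintegral_edist_map_swap π)

lemma wasserstein₁_comm (μ₀ μ₁ : Measure X) : wasserstein₁ μ₀ μ₁ = wasserstein₁ μ₁ μ₀ :=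
  (wasserstein₁_le_comm μ₀ μ₁).antisymm (wasserstein₁_le_comm μ₁ μ₀)

end Wasserstein

section ValueFunction

variable {X Y : Type*} [MeasurableSpace X] [MeasurableSpace Y]

def plansWithFst (μ : Measure X) (Y : Type*) [MeasurableSpace Y] : Set (Measure (X × Y)) :=
  {γ | IsProbabilityMeasure γ ∧ γ.map Prod.fst = μ}

variable [PseudoEMetricSpace X] [OpensMeasurableSpace X] [SecondCountableTopology X]
  [StandardBorelSpace Y]
  {c : X × Y → ℝ≥0∞} {L : Y → ℝ≥0∞} {H : Y × Y → ℝ≥0∞} {G : X × X × Y → Y} {C : ℝ≥0∞}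

theorem iInf_energy_le_add_lintegral_edist
    (hc : Measurable c) (hL : Measurable L) (hH : Measurable H) (hG : Measurable G)
    (hGc : ∀ x₀ x₁ y, c (x₁, G (x₁, x₀, y)) ≤ c (x₀, y) + C * edist x₁ x₀)
    (hGL : ∀ x₀ x₁ y, L (G (x₁, x₀, y)) ≤ L y + C * edist x₁ x₀)
    (hGH : ∀ x₀ x₁ x₀' x₁' y y',
      H (G (x₁, x₀, y), G (x₁', x₀', y')) ≤ H (y, y') + C * (edist x₁ x₀ + edist x₁' x₀'))
    {μ₀ μ₁ : Measure X} {π : Measure (X × X)} (hπ : π ∈ couplings μ₀ μ₁) :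
    ⨅ γ ∈ plansWithFst μ₁ Y, energy c L H γ ≤
      (⨅ γ ∈ plansWithFst μ₀ Y, energy c L H γ) + 4 * C * ∫⁻ p, edist p.1 p.2 ∂π := by
  obtain ⟨hπ, hπ₀, hπ₁⟩ := hπ
  simp_rw [ENNReal.iInf_add]
  refine le_iInf₂ fun γ ⟨hγ, hγ₀⟩ => ?_
  obtain ⟨θ, hθ, hθπ, hθγ⟩ := exists_glue (hπ₀.trans hγ₀.symm)
  set F : (X × X) × Y → X × Y := fun q => (q.1.2, G (q.1.2, q.1.1, q.2))
  have hF : Measurable F := by fun_prop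
  have hFγ : θ.map F ∈ plansWithFst μ₁ Y := by
    refine ⟨Measure.isProbabilityMeasure_map hF.aemeasurable, ?_⟩
    rw [Measure.map_map measurable_fst hF, ← hπ₁, ← hθπ,
      Measure.map_map measurable_snd measurable_fst]
    rfl
  have hdisp : ∫⁻ q, edist q.1.2 q.1.1 ∂θ = ∫⁻ p, edist p.1 p.2 ∂π := by
    rw [← hθπ, lintegral_map measurable_edist measurable_fst]
    exact lintegral_congr fun p => edist_comm _ _
  calc ⨅ γ ∈ plansWithFst μ₁ Y, energy c L H γ ≤ energy c L H (θ.map F) := iInf₂_le _ hFγ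
    _ ≤ energy c L H (θ.map fun q => (q.1.1, q.2)) + 4 * C * ∫⁻ q, edist q.1.2 q.1.1 ∂θ :=
      energy_map_le hc hL hH (by fun_prop) hF (by fun_prop) C
        (fun _ => hGc _ _ _) (fun _ => hGL _ _ _) (fun _ _ => hGH _ _ _ _ _ _)
    _ = energy c L H γ + 4 * C * ∫⁻ p, edist p.1 p.2 ∂π := by rw [hθγ, hdisp]

theorem iInf_energy_le_add_wasserstein₁
    (hc : Measurable c) (hL : Measurable L) (hH : Measurable H) (hG : Measurable G)
    (hC₀ : C ≠ 0) (hC : C ≠ ⊤)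
    (hGc : ∀ x₀ x₁ y, c (x₁, G (x₁, x₀, y)) ≤ c (x₀, y) + C * edist x₁ x₀)
    (hGL : ∀ x₀ x₁ y, L (G (x₁, x₀, y)) ≤ L y + C * edist x₁ x₀)
    (hGH : ∀ x₀ x₁ x₀' x₁' y y',
      H (G (x₁, x₀, y), G (x₁', x₀', y')) ≤ H (y, y') + C * (edist x₁ x₀ + edist x₁' x₀'))
    (μ₀ μ₁ : Measure X) :
    ⨅ γ ∈ plansWithFst μ₁ Y, energy c L H γ ≤
      (⨅ γ ∈ plansWithFst μ₀ Y, energy c L H γ) + 4 * C * wasserstein₁ μ₀ μ₁ := by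
  have h4C₀ : 4 * C ≠ 0 := mul_ne_zero four_ne_zero hC₀
  have h4C : 4 * C ≠ ⊤ := ENNReal.mul_ne_top ENNReal.ofNat_ne_top hC
  simp_rw [wasserstein₁, ENNReal.mul_iInf_of_ne h4C₀ h4C, ENNReal.add_iInf]
  exact le_iInf₂ fun π hπ => iInf_energy_le_add_lintegral_edist hc hL hH hG hGc hGL hGH hπ

end ValueFunction

theorem stability_value_function_general
    {X Y : Type*}
    [MetricSpace X] [SecondCountableTopology X]
    [MeasurableSpace X] [BorelSpace X]
    [TopologicalSpace Y] [PolishSpace Y] [MeasurableSpace Y] [BorelSpace Y]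
    (c : X × Y → ENNReal) (hc : LowerSemicontinuous c)
    (L : Y → ENNReal) (hL : LowerSemicontinuous L)
    (H : Y × Y → ENNReal) (hH : LowerSemicontinuous H)
    (J : Measure (X × Y) → ENNReal)
    (hJ : ∀ γ : Measure (X × Y), J γ =
      ∫⁻ p, c p ∂γ + ∫⁻ y, L y ∂(γ.map Prod.snd) +
        ∫⁻ q, H q ∂((γ.map Prod.snd).prod (γ.map Prod.snd)))
    -- Hypothesis (E): Borel gluing map with constant C > 0
    (G : X × X × Y → Y) (hGmeas : Measurable G)
    (C : ENNReal) (hCpos : 0 < C) (hCfin : C < ⊤)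
    (hGc : ∀ (x0 x1 : X) (y : Y),
      c (x1, G (x1, x0, y)) ≤ c (x0, y) + C * edist x1 x0)
    (hGL : ∀ (x0 x1 : X) (y : Y),
      L (G (x1, x0, y)) ≤ L y + C * edist x1 x0)
    (hGH : ∀ (x0 x1 x0' x1' : X) (y y' : Y),
      H (G (x1, x0, y), G (x1', x0', y')) ≤ H (y, y') + C * (edist x1 x0 + edist x1' x0'))
    (μ0 μ1 : Measure X)
    -- the 1-Wasserstein distance between μ0 and μ1, assumed finite
    (W1 : ENNReal)
    (hW1 : W1 = ⨅ π ∈ {π : Measure (X × X) | IsProbabilityMeasure π ∧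
        π.map Prod.fst = μ0 ∧ π.map Prod.snd = μ1},
      ∫⁻ p, edist p.1 p.2 ∂π) :
    (⨅ γ ∈ {γ : Measure (X × Y) | IsProbabilityMeasure γ ∧ γ.map Prod.fst = μ0}, J γ) ≤
      (⨅ γ ∈ {γ : Measure (X × Y) | IsProbabilityMeasure γ ∧ γ.map Prod.fst = μ1}, J γ)
        + 4 * C * W1 ∧
    (⨅ γ ∈ {γ : Measure (X × Y) | IsProbabilityMeasure γ ∧ γ.map Prod.fst = μ1}, J γ) ≤
      (⨅ γ ∈ {γ : Measure (X × Y) | IsProbabilityMeasure γ ∧ γ.map Prod.fst = μ0}, J γ)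
        + 4 * C * W1 := by
  obtain rfl : J = energy c L H := funext hJ
  obtain rfl : W1 = wasserstein₁ μ0 μ1 := hW1
  have value_le := iInf_energy_le_add_wasserstein₁ hc.measurable hL.measurable hH.measurable
    hGmeas hCpos.ne' hCfin.ne hGc hGL hGH
  exact ⟨wasserstein₁_comm μ0 μ1 ▸ value_le μ1 μ0, value_le μ0 μ1⟩

/-- **stability of the value function.** Under Hypothesis (E), the value
`inf_{P_μ(X×Y)} J` is `4C`-Lipschitz in `μ` for the 1-Wasserstein distance: for `μ0, μ1` with
`W₁(μ0,μ1) < ∞`, each of the two infima is bounded by the other plus `4 C W₁(μ0,μ1)` (in `[0,∞]`;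
in particular one is finite iff the other is). -/
theorem stability_value_function
    {X Y : Type*}
    [MetricSpace X] [CompleteSpace X] [SecondCountableTopology X]
    [MeasurableSpace X] [BorelSpace X]
    [TopologicalSpace Y] [PolishSpace Y] [MeasurableSpace Y] [BorelSpace Y]
    (c : X × Y → ENNReal) (hc : LowerSemicontinuous c)
    (L : Y → ENNReal) (hL : LowerSemicontinuous L)
    (hLcomp : ∀ κ : NNReal, 0 < κ → IsCompact {y : Y | L y ≤ (κ : ENNReal)})
    (H : Y × Y → ENNReal) (hH : LowerSemicontinuous H)
    (hHsymm : ∀ y y' : Y, H (y, y') = H (y', y))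
    (J : Measure (X × Y) → ENNReal)
    (hJ : ∀ γ : Measure (X × Y), J γ =
      ∫⁻ p, c p ∂γ + ∫⁻ y, L y ∂(γ.map Prod.snd) +
        ∫⁻ q, H q ∂((γ.map Prod.snd).prod (γ.map Prod.snd)))
    -- Hypothesis (E): Borel gluing map with constant C > 0
    (G : X × X × Y → Y) (hGmeas : Measurable G)
    (hGcons : ∀ (x : X) (y : Y), G (x, x, y) = y)
    (C : ENNReal) (hCpos : 0 < C) (hCfin : C < ⊤)
    (hGc : ∀ (x0 x1 : X) (y : Y),
      c (x1, G (x1, x0, y)) ≤ c (x0, y) + C * edist x1 x0)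
    (hGL : ∀ (x0 x1 : X) (y : Y),
      L (G (x1, x0, y)) ≤ L y + C * edist x1 x0)
    (hGH : ∀ (x0 x1 x0' x1' : X) (y y' : Y),
      H (G (x1, x0, y), G (x1', x0', y')) ≤ H (y, y') + C * (edist x1 x0 + edist x1' x0'))
    (μ0 μ1 : Measure X) [IsProbabilityMeasure μ0] [IsProbabilityMeasure μ1]
    -- the 1-Wasserstein distance between μ0 and μ1, assumed finite
    (W1 : ENNReal)
    (hW1 : W1 = ⨅ π ∈ {π : Measure (X × X) | IsProbabilityMeasure π ∧
        π.map Prod.fst = μ0 ∧ π.map Prod.snd = μ1},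
      ∫⁻ p, edist p.1 p.2 ∂π)
    (hW1fin : W1 < ⊤) :
    (⨅ γ ∈ {γ : Measure (X × Y) | IsProbabilityMeasure γ ∧ γ.map Prod.fst = μ0}, J γ) ≤
      (⨅ γ ∈ {γ : Measure (X × Y) | IsProbabilityMeasure γ ∧ γ.map Prod.fst = μ1}, J γ)
        + 4 * C * W1 ∧
    (⨅ γ ∈ {γ : Measure (X × Y) | IsProbabilityMeasure γ ∧ γ.map Prod.fst = μ1}, J γ) ≤
      (⨅ γ ∈ {γ : Measure (X × Y) | IsProbabilityMeasure γ ∧ γ.map Prod.fst = μ0}, J γ)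
        + 4 * C * W1 :=
  stability_value_function_general c hc L hL H hH J hJ G hGmeas C hCpos hCfin hGc hGL hGH μ0 μ1 W1
    hW1
end

section
/- Let (Ω,F,P) be a probability space, (𝒳,d) a Polish metric space, F : 𝒳 → ℝ∪{+∞} a functional, and F_{ω,N} : 𝒳 → ℝ∪{+∞} a family of functionals indexed by ω ∈ Ω and N ∈ ℕ. Assume: (1) there is a measurable event Ω_0 with P(Ω_0) = 1 such that for every ω ∈ Ω_0, every x ∈ 𝒳 and every sequence x_N → x in 𝒳, F(x) ≤ liminf_N F_{ω,N}(x_N); (2) for every x ∈ 𝒳 there is a measurable event Ω_x with P(Ω_x) = 1 such that for every ω ∈ Ω_x there exists a sequence x_N → x with limsup_N F_{ω,N}(x_N) ≤ F(x). Then there is a measurable event Ω̄ with P(Ω̄) = 1 such that for every ω ∈ Ω̄ the sequence F_{ω,N} Γ-converges to F: for every x ∈ 𝒳, every sequence x_N → x satisfies F(x) ≤ liminf_N F_{ω,N}(x_N), and there exists a sequence x_N → x with limsup_N F_{ω,N}(x_N) ≤ F(x). -/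
/-!
The Γ-liminf inequality is already assumed on one event of full probability, so only recovery
sequences need work. Second countability yields a countable set `D` that is dense in every
sublevel set of `F`, and the countably many point-dependent events for the points of `D`
intersect in an event of full probability. On that event every point of `D` has a recovery
sequence, and a diagonal argument passes recovery sequences from nearby points of `D` with
smaller energy to an arbitrary point.
-/

open MeasureTheory Filter Topology Set

theorem Filter.exists_tendsto_atTop_eventually_diagonal {Q : ℕ → ℕ → Prop}
    (h : ∀ k, ∀ᶠ N in atTop, Q k N) :
    ∃ φ : ℕ → ℕ, Tendsto φ atTop atTop ∧ ∀ᶠ N in atTop, Q (φ N) N := by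
  classical
  choose M hM using fun k => eventually_atTop.1 (h k)
  refine ⟨fun N => Nat.findGreatest (fun k => M k ≤ N) N, ?_, ?_⟩
  · exact tendsto_atTop_atTop.2 fun k => ⟨max k (M k), fun N hN =>
      Nat.le_findGreatest (le_of_max_le_left hN) (le_of_max_le_right hN)⟩
  · filter_upwards [eventually_ge_atTop (M 0)] with N hN
    exact hM _ _ (Nat.findGreatest_spec (P := fun k => M k ≤ N) (Nat.zero_le N) hN)

section Recovery

variable {X β : Type*} [TopologicalSpace X] [FirstCountableTopology X]
  [CompleteLinearOrder β] [DenselyOrdered β] [TopologicalSpace β] [OrderTopology β]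
  [FirstCountableTopology β]

/-- The Γ-limsup of `G` at `x` is at most `c`. -/
def HasRecoverySeq (G : ℕ → X → β) (x : X) (c : β) : Prop :=
  ∃ xs : ℕ → X, Tendsto xs atTop (𝓝 x) ∧ atTop.limsup (fun N => G N (xs N)) ≤ c

theorem hasRecoverySeq_of_forall_nhds {G : ℕ → X → β} {x : X} {c : β}
    (h : ∀ U ∈ 𝓝 x, ∀ a > c, ∃ xs : ℕ → X, ∀ᶠ N in atTop, xs N ∈ U ∧ G N (xs N) < a) :
    HasRecoverySeq G x c := by
  rcases eq_top_or_lt_top c with rfl | hc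
  · exact ⟨fun _ => x, tendsto_const_nhds, le_top⟩
  obtain ⟨U, hU⟩ := (𝓝 x).exists_antitone_basis
  obtain ⟨a, ha_anti, ha_gt, ha_lim⟩ := exists_seq_strictAnti_tendsto' hc
  choose xs hxs using fun k => h (U k) (hU.mem k) (a k) (ha_gt k).1
  obtain ⟨φ, hφ, hdiag⟩ := exists_tendsto_atTop_eventually_diagonal hxs
  have hlate : ∀ k, ∀ᶠ N in atTop, xs (φ N) N ∈ U k ∧ G N (xs (φ N) N) < a k := fun k => by
    filter_upwards [hdiag, hφ.eventually_ge_atTop k] with N hN hk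
    exact ⟨hU.antitone hk hN.1, hN.2.trans_le (ha_anti.antitone hk)⟩
  refine ⟨fun N => xs (φ N) N,
    hU.1.tendsto_right_iff.2 fun k _ => (hlate k).mono fun _ => And.left, ?_⟩
  rw [limsup_le_iff]
  intro y hy
  obtain ⟨k, hk⟩ := (ha_lim.eventually (gt_mem_nhds hy)).exists
  exact (hlate k).mono fun N hN => hN.2.trans hk

theorem hasRecoverySeq_of_mem_closure_sublevel {G : ℕ → X → β} {F : X → β} {D : Set X}
    (hrec : ∀ d ∈ D, HasRecoverySeq G d (F d))
    {x : X} (hx : ∀ a > F x, x ∈ closure (D ∩ {y | F y < a})) :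
    HasRecoverySeq G x (F x) := by
  refine hasRecoverySeq_of_forall_nhds fun U hU a ha => ?_
  obtain ⟨V, hVU, hV, hxV⟩ := mem_nhds_iff.1 hU
  obtain ⟨d, hdV, hdD, hda⟩ := mem_closure_iff.1 (hx a ha) V hV hxV
  obtain ⟨xs, hxs, hlim⟩ := hrec d hdD
  have hnear : ∀ᶠ N in atTop, xs N ∈ V := hxs.eventually (hV.mem_nhds hdV)
  have hlow : ∀ᶠ N in atTop, G N (xs N) < a := eventually_lt_of_limsup_lt (hlim.trans_lt hda)
  exact ⟨xs, (hnear.and hlow).mono fun N hN => ⟨hVU hN.1, hN.2⟩⟩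

end Recovery

theorem exists_countable_forall_mem_closure_sublevel {X β : Type*} [TopologicalSpace X]
    [SecondCountableTopology X] [LinearOrder β] [DenselyOrdered β] [TopologicalSpace β]
    [OrderTopology β] [TopologicalSpace.SeparableSpace β] (F : X → β) :
    ∃ D : Set X, D.Countable ∧ ∀ x, ∀ a > F x, x ∈ closure (D ∩ {y | F y < a}) := by
  obtain ⟨Q, hQc, hQ⟩ := TopologicalSpace.exists_countable_dense β
  have hsub : ∀ q : β, ∃ t ⊆ {y | F y < q}, t.Countable ∧ {y | F y < q} ⊆ closure t := by
    intro q
    obtain ⟨t, htc, ht⟩ := TopologicalSpace.exists_countable_dense {y | F y < q}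
    exact ⟨(↑) '' t, Subtype.coe_image_subset _ _, htc.image _, Subtype.dense_iff.1 ht⟩
  choose t htF htc hcl using hsub
  refine ⟨⋃ q ∈ Q, t q, hQc.biUnion fun q _ => htc q, fun x a ha => ?_⟩
  obtain ⟨q, hqQ, hxq, hqa⟩ := hQ.exists_between ha
  have hsmall : t q ⊆ (⋃ q ∈ Q, t q) ∩ {y | F y < a} := fun y hy =>
    ⟨mem_biUnion hqQ hy, (htF q hy).trans hqa⟩
  exact closure_mono hsmall (hcl q hxq)

theorem gamma_convergence_full_probability_general
    {Ω : Type*} [MeasurableSpace Ω] (P : Measure Ω) [IsProbabilityMeasure P]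
    {𝒳 : Type*} [MetricSpace 𝒳] [SecondCountableTopology 𝒳]
    (F : 𝒳 → EReal)
    (Fn : Ω → ℕ → 𝒳 → EReal)
    -- (1) Γ-liminf on a fixed event of full probability
    (Ω₀ : Set Ω) (hΩ₀meas : MeasurableSet Ω₀) (hΩ₀ : P Ω₀ = 1)
    (hliminf : ∀ ω ∈ Ω₀, ∀ x : 𝒳, ∀ xs : ℕ → 𝒳, Tendsto xs atTop (𝓝 x) →
      F x ≤ atTop.liminf fun N => Fn ω N (xs N))
    -- (2) recovery sequences on point-dependent events of full probability
    (Ωx : 𝒳 → Set Ω) (hΩxmeas : ∀ x, MeasurableSet (Ωx x)) (hΩx : ∀ x, P (Ωx x) = 1)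
    (hlimsup : ∀ x : 𝒳, ∀ ω ∈ Ωx x, ∃ xs : ℕ → 𝒳, Tendsto xs atTop (𝓝 x) ∧
      (atTop.limsup fun N => Fn ω N (xs N)) ≤ F x) :
    -- conclusion: Γ-convergence on a single event of full probability
    ∃ Ω' : Set Ω, MeasurableSet Ω' ∧ P Ω' = 1 ∧
      ∀ ω ∈ Ω',
        (∀ x : 𝒳, ∀ xs : ℕ → 𝒳, Tendsto xs atTop (𝓝 x) →
          F x ≤ atTop.liminf fun N => Fn ω N (xs N)) ∧
        (∀ x : 𝒳, ∃ xs : ℕ → 𝒳, Tendsto xs atTop (𝓝 x) ∧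
          (atTop.limsup fun N => Fn ω N (xs N)) ≤ F x) := by
  obtain ⟨D, hDc, hD⟩ := exists_countable_forall_mem_closure_sublevel F
  have hmeas : MeasurableSet (Ω₀ ∩ ⋂ d ∈ D, Ωx d) :=
    hΩ₀meas.inter (.biInter hDc fun d _ => hΩxmeas d)
  have hae : Ω₀ ∩ ⋂ d ∈ D, Ωx d ∈ ae P :=
    inter_mem ((mem_ae_iff_prob_eq_one hΩ₀meas).2 hΩ₀)
      ((countable_bInter_mem hDc).2 fun d _ => (mem_ae_iff_prob_eq_one (hΩxmeas d)).2 (hΩx d))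
  refine ⟨_, hmeas, (mem_ae_iff_prob_eq_one hmeas).1 hae, fun ω hω => ⟨hliminf ω hω.1, ?_⟩⟩
  exact fun x => hasRecoverySeq_of_mem_closure_sublevel
    (fun d hd => hlimsup d ω (mem_iInter₂.1 hω.2 d hd)) (hD x)

/-- A criterion for Γ-convergence with full probability: if the Γ-liminf
inequality holds on a single event of full probability and for each point a recovery sequence
exists on an event of full probability (depending on the point), then on a single event of full
probability the whole sequence of functionals Γ-converges. -/
theorem gamma_convergence_full_probability
    {Ω : Type*} [MeasurableSpace Ω] (P : Measure Ω) [IsProbabilityMeasure P]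
    {𝒳 : Type*} [MetricSpace 𝒳] [CompleteSpace 𝒳] [SecondCountableTopology 𝒳]
    (F : 𝒳 → EReal) (hF : ∀ x, F x ≠ ⊥)
    (Fn : Ω → ℕ → 𝒳 → EReal) (hFn : ∀ ω N x, Fn ω N x ≠ ⊥)
    -- (1) Γ-liminf on a fixed event of full probability
    (Ω₀ : Set Ω) (hΩ₀meas : MeasurableSet Ω₀) (hΩ₀ : P Ω₀ = 1)
    (hliminf : ∀ ω ∈ Ω₀, ∀ x : 𝒳, ∀ xs : ℕ → 𝒳, Tendsto xs atTop (𝓝 x) →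
      F x ≤ atTop.liminf fun N => Fn ω N (xs N))
    -- (2) recovery sequences on point-dependent events of full probability
    (Ωx : 𝒳 → Set Ω) (hΩxmeas : ∀ x, MeasurableSet (Ωx x)) (hΩx : ∀ x, P (Ωx x) = 1)
    (hlimsup : ∀ x : 𝒳, ∀ ω ∈ Ωx x, ∃ xs : ℕ → 𝒳, Tendsto xs atTop (𝓝 x) ∧
      (atTop.limsup fun N => Fn ω N (xs N)) ≤ F x) :
    -- conclusion: Γ-convergence on a single event of full probability
    ∃ Ω' : Set Ω, MeasurableSet Ω' ∧ P Ω' = 1 ∧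
      ∀ ω ∈ Ω',
        (∀ x : 𝒳, ∀ xs : ℕ → 𝒳, Tendsto xs atTop (𝓝 x) →
          F x ≤ atTop.liminf fun N => Fn ω N (xs N)) ∧
        (∀ x : 𝒳, ∃ xs : ℕ → 𝒳, Tendsto xs atTop (𝓝 x) ∧
          (atTop.limsup fun N => Fn ω N (xs N)) ≤ F x) :=
  gamma_convergence_full_probability_general P F Fn Ω₀ hΩ₀meas hΩ₀ hliminf Ωx hΩxmeas hΩx hlimsup
end
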